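/- arXiv:math/0103054 — 3 statements merged into one kernel-verified Lean document; each statement's English description precedes it below -/
import Mathlib

section
/- For every k ≥ 2, if 2^k − 1 has finite total stopping time then σ∞(2^k − 1) ≥ k + log₂(3^k − 1); in particular σ∞(2^k − 1) ≥ k·(1 + log 3/log 2) − 1. -/
/-- The 3x+1 function. -/
def T (n : ℕ) : ℕ := if n % 2 = 0 then n / 2 else (3 * n + 1) / 2

/-- The total stopping time: least k with T^[k] n = 1 (junk value sInf ∅ = 0 if none). -/
noncomputable def sigmaInf (n : ℕ) : ℕ := sInf {k | T^[k] n = 1}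

/-- Number of odd iterates among n, T(n), ..., T^[k-1](n). -/
def onesCount (n k : ℕ) : ℕ := ((Finset.range k).filter (fun j => T^[j] n % 2 = 1)).card

lemma T_step (M : ℕ) (hM : 0 < M) : T (2 * M - 1) = 3 * M - 1 := by
  unfold T
  split <;> omega

lemma T_iter_pow (k j : ℕ) (h : j ≤ k) :
    T^[j] (2 ^ k - 1) = 3 ^ j * 2 ^ (k - j) - 1 := by
  induction j with
  | zero => simp
  | succ j ih =>
    have hj : j ≤ k := Nat.le_of_succ_le h
    rw [Function.iterate_succ_apply', ih hj]
    obtain ⟨e, he⟩ : ∃ e, k - j = e + 1 := ⟨k - j - 1, by omega⟩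
    have h1 : 3 ^ j * 2 ^ (k - j) = 2 * (3 ^ j * 2 ^ e) := by
      rw [he, pow_succ]; ring
    rw [h1, T_step _ (by positivity)]
    have h2 : k - (j + 1) = e := by omega
    have h3 : 3 * (3 ^ j * 2 ^ e) = 3 ^ (j + 1) * 2 ^ e := by ring
    rw [h2, h3]

lemma le_two_mul_T (n : ℕ) : n ≤ 2 * T n := by
  unfold T
  split <;> omega

lemma le_pow_mul_iter (n j : ℕ) : n ≤ 2 ^ j * T^[j] n := by
  induction j with
  | zero => simp
  | succ j ih =>
    calc n ≤ 2 ^ j * T^[j] n := ih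
    _ ≤ 2 ^ j * (2 * T (T^[j] n)) := Nat.mul_le_mul_left _ (le_two_mul_T _)
    _ = 2 ^ (j + 1) * T^[j + 1] n := by
        rw [Function.iterate_succ_apply', pow_succ]; ring

theorem stmt4 (k : ℕ) (hk : 2 ≤ k) (hfin : ∃ j, T^[j] (2 ^ k - 1) = 1) :
    (sigmaInf (2 ^ k - 1) : ℝ) ≥ k + Real.logb 2 ((3 : ℝ) ^ k - 1) ∧
    (sigmaInf (2 ^ k - 1) : ℝ) ≥ k * (1 + Real.log 3 / Real.log 2) - 1 := by
  set n := 2 ^ k - 1 with hn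
  set σ := sigmaInf n with hσ
  have hne : {j | T^[j] n = 1}.Nonempty := hfin
  have hmem : T^[σ] n = 1 := Nat.sInf_mem hne
  -- σ ≥ k
  have hkσ : k ≤ σ := by
    by_contra hlt
    push_neg at hlt
    have h1 : T^[σ] n = 3 ^ σ * 2 ^ (k - σ) - 1 := T_iter_pow k σ hlt.le
    have h2 : 2 ≤ 2 ^ (k - σ) := by
      calc 2 = 2 ^ 1 := rfl
      _ ≤ 2 ^ (k - σ) := Nat.pow_le_pow_right (by norm_num) (by omega)
    rw [h1] at hmem
    rcases Nat.eq_zero_or_pos σ with h0 | h0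
    · have h4 : 4 ≤ 2 ^ k := by
        calc 4 = 2 ^ 2 := rfl
        _ ≤ 2 ^ k := Nat.pow_le_pow_right (by norm_num) hk
      simp [h0] at hmem
      omega
    · have h3 : 3 ≤ 3 ^ σ := by
        calc 3 = 3 ^ 1 := rfl
        _ ≤ 3 ^ σ := Nat.pow_le_pow_right (by norm_num) h0
      have h5 : 6 ≤ 3 ^ σ * 2 ^ (k - σ) := by
        calc 6 = 3 * 2 := rfl
        _ ≤ 3 ^ σ * 2 ^ (k - σ) := Nat.mul_le_mul h3 h2
      omega
  -- T^[k] n = 3^k - 1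
  have hiterk : T^[k] n = 3 ^ k - 1 := by
    have := T_iter_pow k k le_rfl
    simpa using this
  -- T^[σ-k] (3^k - 1) = 1
  have hrest : T^[σ - k] (3 ^ k - 1) = 1 := by
    have : T^[(σ - k) + k] n = 1 := by
      rwa [Nat.sub_add_cancel hkσ]
    rwa [Function.iterate_add_apply, hiterk] at this
  -- 3^k - 1 ≤ 2^(σ-k)
  have hbound : (3 ^ k - 1 : ℕ) ≤ 2 ^ (σ - k) := by
    have := le_pow_mul_iter (3 ^ k - 1) (σ - k)
    rwa [hrest, mul_one] at this
  -- cast to ℝ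
  have h3k1 : (1 : ℕ) ≤ 3 ^ k := Nat.one_le_pow _ _ (by norm_num)
  have hboundR : ((3 : ℝ) ^ k - 1) ≤ (2 : ℝ) ^ (σ - k) := by
    have := @Nat.cast_le ℝ _ _ _ |>.mpr hbound
    push_cast [Nat.cast_sub h3k1] at this
    convert this using 2 <;> norm_num
  have h3pos : (0 : ℝ) < (3 : ℝ) ^ k - 1 := by
    have : (3 : ℝ) ^ 2 ≤ (3 : ℝ) ^ k := by
      apply pow_le_pow_right₀ (by norm_num) hk
    nlinarith
  have hlog1 : Real.logb 2 ((3 : ℝ) ^ k - 1) ≤ (σ : ℝ) - k := by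
    have h := Real.logb_le_logb_of_le (by norm_num : (1:ℝ) < 2) h3pos hboundR
    rw [Real.logb_pow, Real.logb_self_eq_one (by norm_num)] at h
    have hc : ((σ - k : ℕ) : ℝ) = (σ : ℝ) - k := by
      push_cast [Nat.cast_sub hkσ]; ring
    rw [mul_one] at h
    linarith [h, hc ▸ h]
  have first : (σ : ℝ) ≥ k + Real.logb 2 ((3 : ℝ) ^ k - 1) := by linarith
  refine ⟨first, ?_⟩
  -- logb 2 (3^k - 1) ≥ k * logb 2 3 - 1
  have h2k : (2 : ℝ) ≤ (3 : ℝ) ^ k := by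
    calc (2 : ℝ) ≤ 3 ^ 1 := by norm_num
    _ ≤ 3 ^ k := pow_le_pow_right₀ (by norm_num) (by omega)
  have hhalf : (3 : ℝ) ^ k / 2 ≤ (3 : ℝ) ^ k - 1 := by linarith
  have hhpos : (0 : ℝ) < (3 : ℝ) ^ k / 2 := by positivity
  have hlog2 : Real.logb 2 ((3 : ℝ) ^ k / 2) ≤ Real.logb 2 ((3 : ℝ) ^ k - 1) :=
    Real.logb_le_logb_of_le (by norm_num) hhpos hhalf
  have hlogdiv : Real.logb 2 ((3 : ℝ) ^ k / 2) = k * Real.logb 2 3 - 1 := by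
    rw [Real.logb_div (by positivity) (by norm_num), Real.logb_pow,
      Real.logb_self_eq_one (by norm_num)]
  have hlogb3 : Real.logb 2 3 = Real.log 3 / Real.log 2 := rfl
  have := first
  rw [hlogdiv] at hlog2
  rw [hlogb3] at hlog2
  nlinarith [hlog2, first]
end

section
/- For every n ≥ 1 and k ≥ 0, there exists a natural number r, depending only on k and the parity vector (n mod 2, T(n) mod 2, …, T^(k−1)(n) mod 2), such that 2^k · T^(k)(n) = 3^w · n + r, where w is the number of ones in the parity vector. -/
lemma card_split (k : ℕ) (v : Fin (k+1) → Bool) :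
    (Finset.univ.filter (fun j : Fin (k+1) => v j = true)).card
      = (Finset.univ.filter (fun j : Fin k => v j.castSucc = true)).card
        + (if v (Fin.last k) = true then 1 else 0) := by
  rw [Finset.card_filter, Finset.card_filter, Fin.sum_univ_castSucc]

theorem stmt7 (k : ℕ) (v : Fin k → Bool) :
    ∃ r : ℕ, ∀ n : ℕ, 1 ≤ n →
      (∀ j : Fin k, (T^[(j : ℕ)] n % 2 = 1 ↔ v j = true)) →
      2 ^ k * T^[k] n = 3 ^ (Finset.univ.filter (fun j : Fin k => v j = true)).card * n + r := by
  induction k with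
  | zero =>
    exact ⟨0, fun n hn hv => by simp⟩
  | succ k ih =>
    obtain ⟨r, hr⟩ := ih (fun j => v j.castSucc)
    by_cases hl : v (Fin.last k) = true
    · refine ⟨3 * r + 2 ^ k, fun n hn hv => ?_⟩
      have h1 := hr n hn (fun j => by simpa using hv j.castSucc)
      have hm : T^[k] n % 2 = 1 := by
        have := (hv (Fin.last k)).mpr hl
        simpa using this
      set m := T^[k] n with hmdef
      have hT : 2 * T m = 3 * m + 1 := by
        unfold T; rw [if_neg (by omega)]; omega
      rw [Function.iterate_succ_apply', ← hmdef, card_split, if_pos hl,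
        pow_succ 2 k, pow_succ 3]
      have hexp : 2 ^ k * 2 * T m = 2 ^ k * (3 * m + 1) := by
        rw [mul_assoc, hT]
      rw [hexp]
      have h2 : 2 ^ k * (3 * m + 1) = 3 * (2 ^ k * m) + 2 ^ k := by ring
      have h3 : (3 ^ (Finset.univ.filter (fun j : Fin k => v j.castSucc = true)).card * 3) * n
          = 3 * (3 ^ (Finset.univ.filter (fun j : Fin k => v j.castSucc = true)).card * n) := by
        ring
      rw [h2, h3, h1]
      ring
    · refine ⟨r, fun n hn hv => ?_⟩
      have h1 := hr n hn (fun j => by simpa using hv j.castSucc)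
      have hm : T^[k] n % 2 = 0 := by
        have h := hv (Fin.last k)
        simp only [Fin.val_last] at h
        rcases Nat.mod_two_eq_zero_or_one (T^[k] n) with h0 | h1
        · exact h0
        · exact absurd (h.mp h1) hl
      set m := T^[k] n with hmdef
      have hT : 2 * T m = m := by
        unfold T; rw [if_pos hm]; omega
      rw [Function.iterate_succ_apply', ← hmdef, card_split, if_neg hl,
        pow_succ 2 k]
      rw [mul_assoc, hT]
      simpa using h1
end

section
/- Let a ≡ b (mod 3^(k+1)) be positive integers not divisible by 3. Then for every vector v ∈ {0,1}^k with at most k ones: there exists a positive integer m not divisible by 3 with T^(k)(m) = a whose iterates m, T(m), …, T^(k−1)(m) have parities given by v (read in reverse along the path) if and only if the same holds with a replaced by b. In other words, the edge-labelled pruned 3x+1 trees of depth k rooted at a and at b are isomorphic. -/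
lemma T_mod3 (m : ℕ) (h : T m % 3 = 0) : m % 3 = 0 := by
  unfold T at h
  split at h <;> omega

lemma T_iter_mod3 : ∀ k m, T^[k] m % 3 = 0 → m % 3 = 0 := by
  intro k
  induction k with
  | zero => intro m h; simpa using h
  | succ k ih =>
    intro m h
    rw [Function.iterate_succ_apply] at h
    exact T_mod3 m (ih (T m) h)

lemma key : ∀ k a b (v : Fin k → Bool), 1 ≤ b → b % 3 ≠ 0 →
    a % 3 ^ (k + 1) = b % 3 ^ (k + 1) →
    (∃ m : ℕ, 0 < m ∧ m % 3 ≠ 0 ∧ T^[k] m = a ∧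
        ∀ j : Fin k, (T^[(j : ℕ)] m % 2 = 1 ↔ v j = true)) →
    (∃ m : ℕ, 0 < m ∧ m % 3 ≠ 0 ∧ T^[k] m = b ∧
        ∀ j : Fin k, (T^[(j : ℕ)] m % 2 = 1 ↔ v j = true)) := by
  intro k
  induction k with
  | zero =>
    intro a b v hb hb3 hab _
    exact ⟨b, hb, hb3, rfl, fun j => j.elim0⟩
  | succ k ih =>
    intro a b v hb hb3 hab ⟨m, hm, hm3, hTm, hpar⟩
    have hTn' : T (T^[k] m) = a := by
      rw [Function.iterate_succ_apply'] at hTm; exact hTm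
    set n := T^[k] m with hn
    have hTn : T n = a := hTn'
    have hn3 : n % 3 ≠ 0 := fun h => hm3 (T_iter_mod3 k m h)
    have hn1 : 1 ≤ n := by omega
    have hplast : n % 2 = 1 ↔ v (Fin.last k) = true := by
      have := hpar (Fin.last k)
      simpa using this
    have habMod : a ≡ b [MOD 3 ^ (k + 2)] := hab
    -- congruence mod 3
    have hab3 : a % 3 = b % 3 := by
      have : a ≡ b [MOD 3] :=
        Nat.ModEq.of_dvd (dvd_pow_self 3 (Nat.succ_ne_zero (k+1))) habMod
      exact this
    cases hv : v (Fin.last k) with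
    | false =>
      have hne : n % 2 = 0 := by
        rw [hv] at hplast; simp at hplast; omega
      have hn2a : n = 2 * a := by
        have : T n = n / 2 := by unfold T; rw [if_pos hne]
        omega
      -- apply ih with a' = 2a, b' = 2b
      have hcong : (2 * a) % 3 ^ (k + 1) = (2 * b) % 3 ^ (k + 1) := by
        have h1 : 2 * a ≡ 2 * b [MOD 3 ^ (k + 2)] := habMod.mul_left 2
        exact Nat.ModEq.of_dvd (pow_dvd_pow 3 (by omega)) h1
      obtain ⟨m', hm', hm'3, hTm', hpar'⟩ :=
        ih (2 * a) (2 * b) (fun j => v j.castSucc) (by omega) (by omega) hcong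
          ⟨m, hm, hm3, by rw [← hn, hn2a],
            fun j => by simpa using hpar j.castSucc⟩
      refine ⟨m', hm', hm'3, ?_, ?_⟩
      · rw [Function.iterate_succ_apply', hTm']
        unfold T
        simp [Nat.mul_mod_right]
      · intro j
        induction j using Fin.lastCases with
        | last =>
          simp only [Fin.val_last, hv]
          rw [hTm']
          simp [Nat.mul_mod_right]
        | cast j =>
          have := hpar' j
          simpa using this
    | true =>
      have hno : n % 2 = 1 := by
        rw [hv] at hplast; simpa using hplast.mpr rfl
      have h3n : 3 * n + 1 = 2 * a := by
        have h1 : T n = (3 * n + 1) / 2 := by unfold T; rw [if_neg (by omega)]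
        omega
      -- b side odd predecessor
      have h2b : (2 * b) % 3 = 1 := by
        have : (2 * a) % 3 = 1 := by omega
        omega
      set nb := (2 * b - 1) / 3 with hnb
      have h3nb : 3 * nb + 1 = 2 * b := by omega
      -- congruence between n and nb mod 3^(k+1)
      have hcong : n % 3 ^ (k + 1) = nb % 3 ^ (k + 1) := by
        have h1 : 3 * n ≡ 3 * nb [MOD 3 ^ (k + 2)] := by
          have h2 : 3 * n + 1 ≡ 3 * nb + 1 [MOD 3 ^ (k + 2)] := by
            rw [h3n, h3nb]; exact habMod.mul_left 2
          exact Nat.ModEq.add_right_cancel' 1 h2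
        have h4 : ((3 : ℤ) ^ (k + 2)) ∣ (3 * (nb : ℤ) - 3 * (n : ℤ)) := by
          have := Nat.modEq_iff_dvd.mp h1
          push_cast at this
          exact_mod_cast this
        have h5 : ((3 : ℤ) ^ (k + 1)) ∣ ((nb : ℤ) - (n : ℤ)) := by
          have h6 : (3 : ℤ) * 3 ^ (k + 1) ∣ 3 * ((nb : ℤ) - (n : ℤ)) := by
            rw [show (3 : ℤ) * ((nb : ℤ) - (n : ℤ)) = 3 * (nb : ℤ) - 3 * (n : ℤ) by ring,
              show (3 : ℤ) * 3 ^ (k + 1) = 3 ^ (k + 2) by ring]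
            exact h4
          exact (mul_dvd_mul_iff_left (by norm_num : (3 : ℤ) ≠ 0)).mp h6
        have : n ≡ nb [MOD 3 ^ (k + 1)] := by
          rw [Nat.modEq_iff_dvd]
          exact_mod_cast h5
        exact this
      have hnb3 : nb % 3 ≠ 0 := by
        have : n % 3 = nb % 3 := by
          have : n ≡ nb [MOD 3] :=
            Nat.ModEq.of_dvd (dvd_pow_self 3 (Nat.succ_ne_zero k)) hcong
          exact this
        omega
      have hnb1 : 1 ≤ nb := by omega
      obtain ⟨m', hm', hm'3, hTm', hpar'⟩ :=
        ih n nb (fun j => v j.castSucc) hnb1 hnb3 hcong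
          ⟨m, hm, hm3, rfl, fun j => by simpa using hpar j.castSucc⟩
      have hnbodd : nb % 2 = 1 := by omega
      refine ⟨m', hm', hm'3, ?_, ?_⟩
      · rw [Function.iterate_succ_apply', hTm']
        unfold T
        rw [if_neg (by omega)]
        omega
      · intro j
        induction j using Fin.lastCases with
        | last =>
          simp only [Fin.val_last, hv]
          rw [hTm']
          simp [hnbodd]
        | cast j =>
          have := hpar' j
          simpa using this

theorem stmt13 (a b k : ℕ) (ha : 1 ≤ a) (hb : 1 ≤ b)
    (ha3 : a % 3 ≠ 0) (hb3 : b % 3 ≠ 0)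
    (hab : a % 3 ^ (k + 1) = b % 3 ^ (k + 1)) (v : Fin k → Bool) :
    ((∃ m : ℕ, 0 < m ∧ m % 3 ≠ 0 ∧ T^[k] m = a ∧
        ∀ j : Fin k, (T^[(j : ℕ)] m % 2 = 1 ↔ v j = true)) ↔
     (∃ m : ℕ, 0 < m ∧ m % 3 ≠ 0 ∧ T^[k] m = b ∧
        ∀ j : Fin k, (T^[(j : ℕ)] m % 2 = 1 ↔ v j = true))) := by
  constructor
  · exact key k a b v hb hb3 hab
  · exact key k b a v ha ha3 hab.symm
end
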